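/- arXiv:2310.15199 — 6 statements merged into one kernel-verified Lean document; each statement's English description precedes it below -/
import Mathlib

section
/- If f₁, f₂ ∈ k[x₁, x₂] over a field k and the Jacobian determinant ∂(f₁,f₂)/∂(x₁,x₂) = (∂f₁/∂x₁)(∂f₂/∂x₂) − (∂f₁/∂x₂)(∂f₂/∂x₁) is nonzero, then f₁ and f₂ are algebraically independent over k. -/
/-!
Over a perfect field, take a nonzero `P` of minimal total degree with `P(f) = 0`. By the chain
rule the vector `(∂ᵢP)(f)` is killed by the Jacobian matrix of `f`, whose rows are linearly
independent, so every `(∂ᵢP)(f)` vanishes and, by minimality, every `∂ᵢP` vanishes. In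
characteristic zero this makes `P` constant; in characteristic `p` every exponent of `P` is
divisible by `p`, so `P = Q ^ p` with `Q(f) = 0` of smaller degree. A general field is reduced to
this case by passing to its algebraic closure, which does not change the Jacobian determinant.
-/

open MvPolynomial

namespace MvPolynomial

variable {ι σ R K : Type*}

theorem pderiv_aeval [CommSemiring R] [Fintype ι] (f : ι → MvPolynomial σ R) (j : σ)
    (P : MvPolynomial ι R) :
    pderiv j (aeval f P) = ∑ i, aeval f (pderiv i P) * pderiv j (f i) := by
  classical
  induction P using MvPolynomial.induction_on with
  | C a => simp
  | add p q hp hq => simp only [map_add, hp, hq, add_mul, Finset.sum_add_distrib]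
  | mul_X p i hp =>
    simp only [map_mul, map_add, aeval_X, Derivation.leibniz, hp, smul_eq_mul, pderiv_X,
      Pi.single_apply, mul_ite, mul_one, mul_zero, apply_ite (aeval f), map_zero, add_mul,
      ite_mul, zero_mul, Finset.sum_add_distrib, Finset.sum_ite_eq, Finset.mem_univ, if_true,
      Finset.mul_sum, mul_assoc]

theorem coeff_mul_eq_zero_of_pderiv_eq_zero [CommSemiring R] {i : σ} {P : MvPolynomial σ R}
    (h : pderiv i P = 0) (s : σ →₀ ℕ) : coeff s P * s i = 0 := by
  classical
  rcases Nat.eq_zero_or_pos (s i) with hs | hs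
  · simp [hs]
  obtain ⟨m, rfl⟩ : ∃ m, s = m + Finsupp.single i 1 :=
    ⟨s - Finsupp.single i 1, (tsub_add_cancel_of_le (Finsupp.single_le_iff.2 hs)).symm⟩
  have := coeff_pderiv (i := i) P m
  rw [h, coeff_zero] at this
  simpa using this.symm

theorem totalDegree_pderiv_lt [CommSemiring R] (i : σ) {P : MvPolynomial σ R}
    (hP : 0 < P.totalDegree) : (pderiv i P).totalDegree < P.totalDegree := by
  refine (Finset.sup_lt_iff hP).2 fun m hm => ?_
  rw [mem_support_iff, coeff_pderiv] at hm
  have := le_totalDegree (mem_support_iff.2 (left_ne_zero_of_mul hm))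
  rw [Finsupp.sum_add_index' (fun _ => rfl) (fun _ _ _ => rfl),
    Finsupp.sum_single_index rfl] at this
  omega

theorem exists_expand_eq_of_forall_dvd [CommSemiring R] {p : ℕ} {P : MvPolynomial σ R}
    (h : ∀ s ∈ P.support, ∀ i, p ∣ s i) : ∃ Q, expand p Q = P := by
  refine ⟨∑ s ∈ P.support, monomial (s.mapRange (· / p) (Nat.zero_div p)) (coeff s P), ?_⟩
  conv_rhs => rw [P.as_sum]
  refine (map_sum _ _ _).trans (Finset.sum_congr rfl fun s hs => ?_)
  have hs' : p • s.mapRange (· / p) (Nat.zero_div p) = s :=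
    Finsupp.ext fun i => Nat.mul_div_cancel' (h s hs i)
  rw [expand_monomial, hs']

theorem totalDegree_eq_zero_of_forall_pderiv_eq_zero [CommSemiring R] [NoZeroDivisors R]
    [CharZero R] {P : MvPolynomial σ R} (h : ∀ i, pderiv i P = 0) : P.totalDegree = 0 :=
  (totalDegree_eq_zero_iff _ P).2 fun s hs i => by
    simpa [mem_support_iff.1 hs] using coeff_mul_eq_zero_of_pderiv_eq_zero (h i) s

theorem exists_expand_eq_of_forall_pderiv_eq_zero [CommSemiring R] [NoZeroDivisors R] (p : ℕ)
    [CharP R p] {P : MvPolynomial σ R} (h : ∀ i, pderiv i P = 0) : ∃ Q, expand p Q = P :=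
  exists_expand_eq_of_forall_dvd fun s hs i => (CharP.cast_eq_zero_iff R p _).1 <| by
    simpa [mem_support_iff.1 hs] using coeff_mul_eq_zero_of_pderiv_eq_zero (h i) s

theorem exists_pow_eq_of_forall_pderiv_eq_zero [CommSemiring R] [NoZeroDivisors R] (p : ℕ)
    [Fact p.Prime] [CharP R p] [PerfectRing R p] {P : MvPolynomial σ R}
    (h : ∀ i, pderiv i P = 0) :
    ∃ Q : MvPolynomial σ R, Q ^ p = P ∧ Q.totalDegree * p ≤ P.totalDegree := by
  obtain ⟨Q, rfl⟩ := exists_expand_eq_of_forall_pderiv_eq_zero p h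
  refine ⟨map (frobeniusEquiv R p).symm Q, ?_, ?_⟩
  · rw [← map_frobenius_expand, map_expand, map_map, frobenius_comp_frobeniusEquiv_symm, map_id]
  · rw [totalDegree_expand]
    exact Nat.mul_le_mul_right p (Finset.sup_mono (support_map_subset _ _))

noncomputable def jacobian [CommSemiring R] (f : ι → MvPolynomial σ R) :
    Matrix ι σ (MvPolynomial σ R) :=
  Matrix.of fun i j => pderiv j (f i)

theorem aeval_pderiv_eq_zero_of_aeval_eq_zero [CommRing R] [Fintype ι]
    {f : ι → MvPolynomial σ R} (hf : LinearIndependent (MvPolynomial σ R) (jacobian f))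
    {P : MvPolynomial ι R} (hP : aeval f P = 0) (i : ι) : aeval f (pderiv i P) = 0 := by
  refine Fintype.linearIndependent_iff.1 hf (fun i => aeval f (pderiv i P)) ?_ i
  funext j
  simp only [Finset.sum_apply, Pi.smul_apply, smul_eq_mul, jacobian, Matrix.of_apply,
    Pi.zero_apply]
  rw [← pderiv_aeval, hP, map_zero]

theorem aeval_injective_of_linearIndependent_jacobian [Field K] [PerfectField K] [Fintype ι]
    {f : ι → MvPolynomial σ K} (hf : LinearIndependent (MvPolynomial σ K) (jacobian f)) :
    Function.Injective (aeval (R := K) f) := by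
  refine (injective_iff_map_eq_zero _).2 fun P hP => ?_
  induction hd : P.totalDegree using Nat.strong_induction_on generalizing P with
  | _ n ih =>
    subst hd
    rcases Nat.eq_zero_or_pos P.totalDegree with hconst | hpos
    · rw [totalDegree_eq_zero_iff_eq_C.1 hconst] at hP ⊢
      rw [aeval_C, map_eq_zero_iff _ (algebraMap K _).injective] at hP
      rw [hP, map_zero]
    have hpderiv : ∀ i, pderiv i P = 0 := fun i =>
      ih _ (totalDegree_pderiv_lt i hpos) _ (aeval_pderiv_eq_zero_of_aeval_eq_zero hf hP i) rfl
    obtain ⟨p, hchar⟩ := CharP.exists K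
    rcases CharP.char_is_prime_or_zero K p with hp | rfl
    · have := Fact.mk hp
      obtain ⟨Q, rfl, hQ⟩ := exists_pow_eq_of_forall_pderiv_eq_zero p hpderiv
      have hQ0 : aeval f Q = 0 := (pow_eq_zero_iff hp.ne_zero).1 (by rwa [map_pow] at hP)
      rw [ih _ (by nlinarith [hp.two_le]) _ hQ0 rfl, zero_pow hp.ne_zero]
    · have := CharP.charP_to_charZero K
      exact absurd (totalDegree_eq_zero_of_forall_pderiv_eq_zero hpderiv) hpos.ne'

theorem algebraicIndependent_of_det_jacobian_ne_zero [Field K] [Fintype σ] [DecidableEq σ]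
    {f : σ → MvPolynomial σ K} (hf : (jacobian f).det ≠ 0) : AlgebraicIndependent K f := by
  let φ := algebraMap K (AlgebraicClosure K)
  have hφ : Function.Injective (map (σ := σ) φ) := map_injective φ φ.injective
  have hdet : (jacobian fun i => map φ (f i)).det ≠ 0 := by
    have : jacobian (fun i => map φ (f i)) = (map φ).mapMatrix (jacobian f) := by
      ext i j : 2
      simp [jacobian, pderiv_map]
    rw [this, ← RingHom.map_det]
    exact (map_ne_zero_iff _ hφ).2 hf
  have hcomm (P : MvPolynomial σ K) :
      map φ (aeval f P) = aeval (fun i => map φ (f i)) (map φ P) := by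
    rw [aeval_eq_bind₁, aeval_eq_bind₁, map_bind₁]
  have hinj := aeval_injective_of_linearIndependent_jacobian
    (Matrix.linearIndependent_rows_of_det_ne_zero hdet)
  rw [algebraicIndependent_iff_injective_aeval]
  intro P Q hPQ
  exact hφ <| hinj <| by rw [← hcomm, ← hcomm, hPQ]

end MvPolynomial

theorem stmt_0 {k : Type*} [Field k] (f₁ f₂ : MvPolynomial (Fin 2) k)
    (hJ : pderiv 0 f₁ * pderiv 1 f₂ - pderiv 1 f₁ * pderiv 0 f₂ ≠ 0) :
    AlgebraicIndependent k ![f₁, f₂] := by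
  refine algebraicIndependent_of_det_jacobian_ne_zero ?_
  simpa [Matrix.det_fin_two, jacobian] using hJ
end

section
/- If f₁, f₂ ∈ k[x₁, x₂] and the Jacobian determinant ∂(f₁,f₂)/∂(x₁,x₂) is nonzero, then the field extension k(x₁,x₂)/k(f₁,f₂) is separable algebraic. -/
/-! The Kähler differential `d : K → Ω[K/F]` kills `f₁, f₂ ∈ F`. By the chain rule
`dfⱼ = ∂₀fⱼ • dx₀ + ∂₁fⱼ • dx₁`, so the nonvanishing Jacobian forces `dx₀ = dx₁ = 0`; hence `d`
vanishes on `k[x₀, x₁]` and, by the quotient rule, on its fraction field `K`. Thus `Ω[K/F] = 0`,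
i.e. `K/F` is formally unramified, and since `K` is essentially of finite type over `F`, it is a
finite separable extension. -/

open MvPolynomial

theorem eq_zero_and_eq_zero_of_smul_add_smul_eq_zero {K M : Type*} [Field K] [AddCommGroup M]
    [Module K M] {a b c d : K} {x y : M} (h₁ : a • x + b • y = 0) (h₂ : c • x + d • y = 0)
    (hdet : a * d - b * c ≠ 0) : x = 0 ∧ y = 0 := by
  have hx : (a * d - b * c) • x = d • (a • x + b • y) - b • (c • x + d • y) := by module
  have hy : (a * d - b * c) • y = a • (c • x + d • y) - c • (a • x + b • y) := by module
  simp only [h₁, h₂, smul_zero, sub_zero] at hx hy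
  exact ⟨(smul_eq_zero.mp hx).resolve_left hdet, (smul_eq_zero.mp hy).resolve_left hdet⟩

theorem Derivation.eq_zero_of_isFractionRing {R K M : Type*} [CommRing R] [Field K] [Algebra R K]
    [AddCommGroup M] [Module K M] [Module R M] (A : Type*) [CommRing A] [Algebra A K]
    [IsFractionRing A K] (D : Derivation R K M) (h : ∀ a : A, D (algebraMap A K a) = 0) :
    D = 0 := by
  ext z
  obtain ⟨x, y, -, rfl⟩ := IsFractionRing.div_surjective A z
  simp [Derivation.leibniz_div, h]

theorem KaehlerDifferential.D_algebraMap_mvPolynomial {R S B σ : Type*} [Fintype σ]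
    [CommRing R] [CommRing S] [CommRing B] [Algebra R S] [Algebra S B] [Algebra R B]
    [Algebra (MvPolynomial σ R) B] [IsScalarTower R S B] [IsScalarTower R (MvPolynomial σ R) B]
    (p : MvPolynomial σ R) :
    D S B (algebraMap _ B p) =
      ∑ i, algebraMap _ B (pderiv i p) • D S B (algebraMap _ B (X i : MvPolynomial σ R)) := by
  have hp := congrArg (map R S (MvPolynomial σ R) B) ((mvPolynomialBasis R σ).sum_repr (D R _ p))
  simp only [map_sum, LinearMap.map_smul, mvPolynomialBasis_repr_apply, mvPolynomialBasis_apply,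
    map_D] at hp
  simp only [← hp, algebraMap_smul]

theorem Algebra.IsSeparable.of_kaehlerDifferential_D_eq_zero {F K : Type*} [Field F] [Field K]
    [Algebra F K] [Algebra.EssFiniteType F K] (h : KaehlerDifferential.D F K = 0) :
    Algebra.IsSeparable F K := by
  have : Subsingleton Ω[K⁄F] := by
    refine subsingleton_of_forall_eq 0 fun ω ↦ ?_
    have hω : ω ∈ Submodule.span K (Set.range (KaehlerDifferential.D F K)) := by
      rw [KaehlerDifferential.span_range_derivation]; trivial
    simpa [h] using hω
  have : Algebra.FormallyUnramified F K := ⟨this⟩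
  exact Algebra.FormallyUnramified.isSeparable F K

theorem stmt_1 {k : Type*} [Field k] (f₁ f₂ : MvPolynomial (Fin 2) k)
    (hJ : pderiv 0 f₁ * pderiv 1 f₂ - pderiv 1 f₁ * pderiv 0 f₂ ≠ 0) :
    let K := FractionRing (MvPolynomial (Fin 2) k)
    let F : IntermediateField k K :=
      IntermediateField.adjoin k
        {algebraMap (MvPolynomial (Fin 2) k) K f₁, algebraMap (MvPolynomial (Fin 2) k) K f₂}
    Algebra.IsAlgebraic F K ∧ Algebra.IsSeparable F K := by
  intro K F
  let ι := algebraMap (MvPolynomial (Fin 2) k) K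
  set dx₀ := KaehlerDifferential.D F K (ι (X 0))
  set dx₁ := KaehlerDifferential.D F K (ι (X 1))
  have hchain (f : MvPolynomial (Fin 2) k) :
      KaehlerDifferential.D F K (ι f) = ι (pderiv 0 f) • dx₀ + ι (pderiv 1 f) • dx₁ := by
    rw [KaehlerDifferential.D_algebraMap_mvPolynomial, Fin.sum_univ_two]
  have hD_mem (f : MvPolynomial (Fin 2) k) (hf : ι f ∈ F) : KaehlerDifferential.D F K (ι f) = 0 :=
    (KaehlerDifferential.D F K).map_algebraMap (⟨ι f, hf⟩ : F)
  have hdet : ι (pderiv 0 f₁) * ι (pderiv 1 f₂) - ι (pderiv 1 f₁) * ι (pderiv 0 f₂) ≠ 0 := by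
    simpa only [map_sub, map_mul] using
      (map_ne_zero_iff ι (IsFractionRing.injective (MvPolynomial (Fin 2) k) K)).mpr hJ
  have hf₁ : ι f₁ ∈ F := IntermediateField.subset_adjoin k _ (Set.mem_insert _ _)
  have hf₂ : ι f₂ ∈ F := IntermediateField.subset_adjoin k _ (Set.mem_insert_of_mem _ rfl)
  obtain ⟨hdx₀, hdx₁⟩ := eq_zero_and_eq_zero_of_smul_add_smul_eq_zero
    ((hchain f₁).symm.trans (hD_mem f₁ hf₁)) ((hchain f₂).symm.trans (hD_mem f₂ hf₂)) hdet
  have hD : KaehlerDifferential.D F K = 0 :=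
    Derivation.eq_zero_of_isFractionRing (MvPolynomial (Fin 2) k) _ fun p ↦ by
      rw [hchain, hdx₀, hdx₁, smul_zero, smul_zero, add_zero]
  have : Algebra.EssFiniteType F K := .of_comp k F K
  have hsep := Algebra.IsSeparable.of_kaehlerDifferential_D_eq_zero hD
  exact ⟨Algebra.IsSeparable.isAlgebraic F K, hsep⟩
end

section
/- If f₁, f₂ ∈ k[x₁, x₂] and the Jacobian determinant ∂(f₁,f₂)/∂(x₁,x₂) is a nonzero constant, then any common divisor g of f₁ and f₂ in k[x₁,x₂] is a unit (i.e., gcd(f₁,f₂) = 1). -/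
open MvPolynomial

/-- Writing `a = g a'`, `b = g b'`, Leibniz gives `Dᵢ a ≡ a' Dᵢ g` modulo `g`, and the two
products `a' b' D₁ g D₂ g` cancel. -/
theorem Derivation.dvd_mul_sub_mul_of_dvd {R A : Type*} [CommSemiring R] [CommRing A]
    [Algebra R A] (D₁ D₂ : Derivation R A A) {g a b : A} (ha : g ∣ a) (hb : g ∣ b) :
    g ∣ D₁ a * D₂ b - D₂ a * D₁ b := by
  obtain ⟨a, rfl⟩ := ha
  obtain ⟨b, rfl⟩ := hb
  simp only [Derivation.leibniz, smul_eq_mul]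
  exact ⟨g * (D₁ a * D₂ b - D₂ a * D₁ b) + a * D₂ b * D₁ g + b * D₁ a * D₂ g
    - a * D₁ b * D₂ g - b * D₂ a * D₁ g, by ring⟩

theorem stmt_3 {k : Type*} [Field k] (f₁ f₂ : MvPolynomial (Fin 2) k)
    (hJ : ∃ c : k, c ≠ 0 ∧
      pderiv 0 f₁ * pderiv 1 f₂ - pderiv 1 f₁ * pderiv 0 f₂ = C c)
    (g : MvPolynomial (Fin 2) k) (hg1 : g ∣ f₁) (hg2 : g ∣ f₂) :
    IsUnit g := by
  obtain ⟨c, hc, hJ⟩ := hJ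
  have hg : g ∣ C c := hJ ▸ Derivation.dvd_mul_sub_mul_of_dvd (R := k)
    (A := MvPolynomial (Fin 2) k) (pderiv 0) (pderiv 1) hg1 hg2
  exact isUnit_of_dvd_unit hg (hc.isUnit.map C)
end

section
/- Let k have characteristic p > 0 and let h(x₁,x₂) ∈ k[x₁,x₂]. The polynomial m(t) = t + h(x₁, t^p) − (x₂ + h(x₁, x₂^p)) is irreducible in k(x₁, x₂ + h(x₁,x₂^p))[t]. -/
/-!
Write `φ₂ = x₂ + h(x₁, x₂^p)`. Since `x₂` is a root of `t + h(x₁, t^p) - φ₂`, a nonzero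
polynomial over `k[x₁, φ₂]`, the pair `x₁, φ₂` is a transcendence basis of `k(x₁, x₂)`. Hence
`k(x₁, φ₂)` is the fraction field of a polynomial ring `k[u, v]` and `m` becomes
`t + h(u, t^p) - v`. This polynomial is primitive in `t`, its `t`-coefficient being `1` because
`p ≠ 1`, and it is irreducible in `k[u, v][t]` because it has degree one in `v` with unit leading
coefficient. Gauss's lemma concludes.
-/

open MvPolynomial

namespace Polynomial

theorem coeff_expand_one {R : Type*} [CommSemiring R] {p : ℕ} (hp : p ≠ 1) (f : R[X]) :
    (expand R p f).coeff 1 = 0 := by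
  rcases Nat.eq_zero_or_pos p with rfl | hp0
  · simp
  · rw [coeff_expand hp0, if_neg (by rwa [Nat.dvd_one])]

theorem isPrimitive_of_isUnit_coeff {R : Type*} [CommSemiring R] {f : R[X]} {n : ℕ}
    (hn : IsUnit (f.coeff n)) : f.IsPrimitive := by
  rintro r ⟨q, rfl⟩
  rw [coeff_C_mul] at hn
  exact isUnit_of_mul_isUnit_left hn

theorem Bivariate.irreducible_map_C_sub_C_X {R : Type*} [CommRing R] [IsDomain R] (f : R[X]) :
    Irreducible (f.map C - C X : R[X][X]) := by
  rw [← MulEquiv.irreducible_iff Bivariate.swap, map_sub, Bivariate.swap_map_C,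
    Bivariate.swap_X, ← neg_sub]
  exact (Associated.refl _).neg_right.irreducible (irreducible_X_sub_C f)

end Polynomial

section FiberPoly

variable {k : Type*} [CommSemiring k] (p : ℕ) (h : MvPolynomial (Fin 2) k)

/-- The paper's `m(t)` at `(a, b) = (x₁, φ₂)`; its roots form the fibre over `(a, b)` of
`(x₁, x₂) ↦ (x₁, x₂ + h(x₁, x₂^p))`. -/
noncomputable def fiberPoly {R : Type*} [CommRing R] [Algebra k R] (a b : R) : Polynomial R :=
  Polynomial.X + aeval ![Polynomial.C a, Polynomial.X ^ p] h - Polynomial.C b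

variable {R S : Type*} [CommRing R] [Algebra k R] [CommRing S] [Algebra k S]

theorem aeval_C_X_pow_eq_expand (a : R) :
    aeval ![Polynomial.C a, Polynomial.X ^ p] h
      = Polynomial.expand R p (aeval ![Polynomial.C a, Polynomial.X] h) := by
  rw [← AlgHom.restrictScalars_apply (R := k) (Polynomial.expand R p),
    MvPolynomial.comp_aeval_apply]
  congr 1
  ext i : 1
  fin_cases i <;> simp

variable {p} in
theorem coeff_fiberPoly_one (hp : p ≠ 1) (a b : R) : (fiberPoly p h a b).coeff 1 = 1 := by
  rw [fiberPoly, aeval_C_X_pow_eq_expand]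
  simp [Polynomial.coeff_expand_one hp]

variable {p} in
theorem fiberPoly_ne_zero [Nontrivial R] (hp : p ≠ 1) (a b : R) : fiberPoly p h a b ≠ 0 :=
  fun h0 ↦ by simpa [h0] using coeff_fiberPoly_one h hp a b

theorem map_fiberPoly {F : Type*} [FunLike F R S] [AlgHomClass F k R S] (f : F) (a b : R) :
    (fiberPoly p h a b).map (f : R →+* S) = fiberPoly p h (f a) (f b) := by
  rw [fiberPoly, fiberPoly, show (f : R →+* S) = (AlgHomClass.toAlgHom f : R →+* S) from rfl,
    ← Polynomial.coe_mapAlgHom, map_sub, map_add, MvPolynomial.comp_aeval_apply]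
  congr
  · simp
  · ext i : 1
    fin_cases i <;> simp
  · simp

theorem aeval_fiberPoly [Algebra R S] [IsScalarTower k R S] (a b : R) (c : S) :
    Polynomial.aeval c (fiberPoly p h a b)
      = c + aeval ![algebraMap R S a, c ^ p] h - algebraMap R S b := by
  rw [fiberPoly, map_sub, map_add, Polynomial.aeval_X, Polynomial.aeval_C,
    ← AlgHom.restrictScalars_apply (R := k) (Polynomial.aeval c), MvPolynomial.comp_aeval_apply]
  congr
  ext i : 1
  fin_cases i <;> simp

end FiberPoly

section Generic

variable {k : Type*} [Field k] (p : ℕ) (h : MvPolynomial (Fin 2) k)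

theorem irreducible_fiberPoly_X_zero_X_one :
    Irreducible (fiberPoly p h (X 0 : MvPolynomial (Fin 2) k) (X 1)) := by
  have hbivariate : fiberPoly p h (Polynomial.C Polynomial.X : Polynomial (Polynomial k))
      Polynomial.X = (fiberPoly p h (Polynomial.X : Polynomial k) 0).map Polynomial.C
        - Polynomial.C Polynomial.X := by
    have hC := map_fiberPoly p h (Polynomial.CAlgHom (R := k) (A := Polynomial k)) Polynomial.X 0
    rw [Polynomial.CAlgHom_apply, map_zero] at hC
    calc _ = fiberPoly p h (Polynomial.C Polynomial.X : Polynomial (Polynomial k)) 0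
          - Polynomial.C Polynomial.X := by simp [fiberPoly]
      _ = _ := by rw [← hC]; rfl
  have hmv : (fiberPoly p h (Polynomial.C Polynomial.X : Polynomial (Polynomial k))
      Polynomial.X).map (Polynomial.Bivariate.equivMvPolynomial k : _ →+* _)
        = fiberPoly p h (X 0 : MvPolynomial (Fin 2) k) (X 1) := by
    simpa using map_fiberPoly p h (Polynomial.Bivariate.equivMvPolynomial k)
      (Polynomial.C Polynomial.X : Polynomial (Polynomial k)) Polynomial.X
  rw [← hmv]
  refine (MulEquiv.irreducible_iff
    (Polynomial.mapEquiv (Polynomial.Bivariate.equivMvPolynomial k).toRingEquiv)).mpr ?_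
  rw [hbivariate]
  exact Polynomial.Bivariate.irreducible_map_C_sub_C_X _

variable {p} in
theorem irreducible_map_fiberPoly_X_zero_X_one (hp : p ≠ 1) :
    Irreducible ((fiberPoly p h (X 0 : MvPolynomial (Fin 2) k) (X 1)).map
      (algebraMap _ (FractionRing (MvPolynomial (Fin 2) k)))) :=
  (Polynomial.isPrimitive_of_isUnit_coeff (n := 1) (by simp [coeff_fiberPoly_one h hp])
    ).irreducible_iff_irreducible_map_fraction_map.mp (irreducible_fiberPoly_X_zero_X_one p h)

variable {p} in
theorem algebraicIndependent_X_zero_X_one_add_aeval (hp : p ≠ 1) :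
    AlgebraicIndependent k ![(X 0 : MvPolynomial (Fin 2) k), X 1 + aeval ![X 0, X 1 ^ p] h] := by
  set x := ![(X 0 : MvPolynomial (Fin 2) k), X 1 + aeval ![X 0, X 1 ^ p] h]
  set S := Algebra.adjoin k (Set.range x)
  have hx : ∀ i, x i ∈ S := fun i ↦ Algebra.subset_adjoin ⟨i, rfl⟩
  have hX1 : IsAlgebraic S (X 1 : MvPolynomial (Fin 2) k) := by
    refine ⟨fiberPoly p h ⟨x 0, hx 0⟩ ⟨x 1, hx 1⟩, fiberPoly_ne_zero h hp _ _, ?_⟩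
    rw [aeval_fiberPoly]
    simp [x]
  have : Algebra.IsAlgebraic S (MvPolynomial (Fin 2) k) := by
    refine ⟨fun a ↦ IsAlgebraic.adjoin_of_forall_isAlgebraic (s := Set.range X) ?_
      (isAlgebraic_algebraMap (⟨a, by simp [MvPolynomial.adjoin_range_X]⟩ :
        Algebra.adjoin k (Set.range (X : Fin 2 → MvPolynomial (Fin 2) k))))⟩
    rintro _ ⟨⟨i, rfl⟩, -⟩
    fin_cases i
    · exact isAlgebraic_algebraMap (⟨x 0, hx 0⟩ : S)
    · exact hX1
  exact (Algebra.IsAlgebraic.isTranscendenceBasis_of_lift_le_trdeg_of_finite k x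
    (by simp [MvPolynomial.trdeg_of_isDomain])).1

variable {p} in
theorem irreducible_fiberPoly_of_algebraicIndependent (hp : p ≠ 1) {L : Type*} [Field L]
    [Algebra k L] {x y : L} (hxy : AlgebraicIndependent k ![x, y]) :
    Irreducible (fiberPoly p h
      (⟨x, IntermediateField.subset_adjoin k _ (by simp)⟩ : IntermediateField.adjoin k {x, y})
      ⟨y, IntermediateField.subset_adjoin k _ (by simp)⟩) := by
  let e : FractionRing (MvPolynomial (Fin 2) k) ≃ₐ[k] IntermediateField.adjoin k {x, y} :=
    hxy.aevalEquivField.trans (IntermediateField.equivOfEq (by rw [Matrix.range_cons_cons_empty]))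
  have hx : e (algebraMap (MvPolynomial (Fin 2) k) _ (X 0))
      = ⟨x, IntermediateField.subset_adjoin k _ (by simp)⟩ := Subtype.ext (by simp [e])
  have hy : e (algebraMap (MvPolynomial (Fin 2) k) _ (X 1))
      = ⟨y, IntermediateField.subset_adjoin k _ (by simp)⟩ := Subtype.ext (by simp [e])
  have hgeneric := irreducible_map_fiberPoly_X_zero_X_one h hp
  rw [← IsScalarTower.coe_toAlgHom k, map_fiberPoly] at hgeneric
  rw [← hx, ← hy, ← map_fiberPoly]
  exact (MulEquiv.irreducible_iff (Polynomial.mapEquiv e.toRingEquiv)).mpr hgeneric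

end Generic

theorem stmt_7_general {k : Type*} [Field k] (p : ℕ) [CharP k p]
    (h : MvPolynomial (Fin 2) k) :
    let φ₂ : MvPolynomial (Fin 2) k := X 1 + aeval ![X 0, (X 1) ^ p] h
    let K := FractionRing (MvPolynomial (Fin 2) k)
    let ι : MvPolynomial (Fin 2) k →+* K := algebraMap _ _
    let F : IntermediateField k K := IntermediateField.adjoin k {ι (X 0), ι φ₂}
    ∀ (hx : ι (X 0) ∈ F) (hf : ι φ₂ ∈ F),
      Irreducible
        (Polynomial.X
          + aeval ![Polynomial.C (⟨ι (X 0), hx⟩ : F), Polynomial.X ^ p] h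
          - Polynomial.C (⟨ι φ₂, hf⟩ : F)) := by
  intro φ₂ K ι F hx hf
  have hp : p ≠ 1 := CharP.char_ne_one k p
  have hind : AlgebraicIndependent k ![ι (X 0), ι φ₂] := by
    convert (algebraicIndependent_X_zero_X_one_add_aeval h hp).map'
      (f := IsScalarTower.toAlgHom k (MvPolynomial (Fin 2) k) K) (IsFractionRing.injective _ _)
      using 1
    ext i
    fin_cases i <;> rfl
  exact irreducible_fiberPoly_of_algebraicIndependent h hp hind

theorem stmt_7 {k : Type*} [Field k] (p : ℕ) (hp : 0 < p) [CharP k p]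
    (h : MvPolynomial (Fin 2) k) :
    let φ₂ : MvPolynomial (Fin 2) k := X 1 + aeval ![X 0, (X 1) ^ p] h
    let K := FractionRing (MvPolynomial (Fin 2) k)
    let ι : MvPolynomial (Fin 2) k →+* K := algebraMap _ _
    let F : IntermediateField k K := IntermediateField.adjoin k {ι (X 0), ι φ₂}
    ∀ (hx : ι (X 0) ∈ F) (hf : ι φ₂ ∈ F),
      Irreducible
        (Polynomial.X
          + aeval ![Polynomial.C (⟨ι (X 0), hx⟩ : F), Polynomial.X ^ p] h
          - Polynomial.C (⟨ι φ₂, hf⟩ : F)) :=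
  stmt_7_general p h
end

section
/- Let k have characteristic p > 2, let a be an integer with 1 < a < p and 2a + 1 < p not divisible by p, let α ∈ k*, and set f₁ = x₁(α x₁^{a−1} x₂^{p−a} + 1) and f₂ = x₂((aα/(a−1)) x₁^{a−1} x₂^{p−a} + 1). Then ∂(f₁,f₂)/∂(x₁,x₂) = 1, i.e., (f₁,f₂) is a Jacobian pair. -/
/-!
Write `u = x₁^(a-1) x₂^(p-a)`. Euler's relations `x₁ ∂₁u = (a-1) u` and `x₂ ∂₂u = (p-a) u`
reduce the Jacobian of `x₁(αu + 1), x₂(βu + 1)` to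
`1 + (αa + β(p-a+1)) u + αβ p u²`. In characteristic `p` the quadratic coefficient vanishes, and
`p - a + 1 = 1 - a` so that `β = aα/(a-1)` is exactly the choice killing the linear one.
-/

open MvPolynomial

namespace MvPolynomial

variable {R σ : Type*} [CommRing R] {i j : σ}

theorem X_mul_pderiv_X_pow_mul_X_pow (hij : i ≠ j) (e f : ℕ) :
    X i * pderiv i (X i ^ e * X j ^ f : MvPolynomial σ R)
      = (e : MvPolynomial σ R) * (X i ^ e * X j ^ f) := by
  rcases e with _ | e
  · simp [pderiv_X_of_ne hij.symm]
  · simp only [pderiv_mul, pderiv_pow, pderiv_X_self, pderiv_X_of_ne hij.symm, Nat.add_sub_cancel]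
    simp only [Nat.cast_add, Nat.cast_one, mul_one, mul_zero, add_zero]
    ring

theorem jacobian_X_mul_C_mul_add_one (hij : i ≠ j) {u : MvPolynomial σ R} {m n : R}
    (hi : X i * pderiv i u = C m * u) (hj : X j * pderiv j u = C n * u) (α β : R) :
    pderiv i (X i * (C α * u + 1)) * pderiv j (X j * (C β * u + 1))
        - pderiv j (X i * (C α * u + 1)) * pderiv i (X j * (C β * u + 1))
      = 1 + C (α * (m + 1) + β * (n + 1)) * u + C (α * β * (m + n + 1)) * u ^ 2 := by
  simp only [pderiv_mul, pderiv_X_self, pderiv_X_of_ne hij, pderiv_X_of_ne hij.symm, map_add,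
    pderiv_C, pderiv_one, map_add, map_mul, map_one]
  -- the product of the off-diagonal entries is `αβ (X i ∂ᵢu)(X j ∂ⱼu)`, so the Jacobian is affine
  -- in `X i ∂ᵢu` and `X j ∂ⱼu`
  linear_combination C α * (C β * u + 1) * hi + C β * (C α * u + 1) * hj

end MvPolynomial

theorem stmt_13_general {k : Type*} [Field k] (p : ℕ) [CharP k p]
    (a : ℕ) (ha1 : 1 < a) (hap : a < p)
    (α : k) :
    let u : MvPolynomial (Fin 2) k := X 0 ^ (a - 1) * X 1 ^ (p - a)
    let f₁ : MvPolynomial (Fin 2) k := X 0 * (C α * u + 1)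
    let f₂ : MvPolynomial (Fin 2) k := X 1 * (C ((a : k) * α / ((a : k) - 1)) * u + 1)
    pderiv 0 f₁ * pderiv 1 f₂ - pderiv 1 f₁ * pderiv 0 f₂ = 1 := by
  intro u f₁ f₂
  have ha_sub_one : (a : k) - 1 ≠ 0 := by
    rw [← Nat.cast_pred (by omega), Ne, CharP.cast_eq_zero_iff k p]
    exact Nat.not_dvd_of_pos_of_lt (by omega) (by omega)
  have hp : (p : k) = 0 := CharP.cast_eq_zero k p
  have hu₀ : X 0 * pderiv 0 u = C ((a - 1 : ℕ) : k) * u := by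
    rw [map_natCast]; exact X_mul_pderiv_X_pow_mul_X_pow (by decide) _ _
  have hu₁ : X 1 * pderiv 1 u = C ((p - a : ℕ) : k) * u := by
    rw [map_natCast, show u = X 1 ^ (p - a) * X 0 ^ (a - 1) from mul_comm _ _]
    exact X_mul_pderiv_X_pow_mul_X_pow (by decide) _ _
  rw [jacobian_X_mul_C_mul_add_one (by decide) hu₀ hu₁, Nat.cast_sub hap.le,
    Nat.cast_pred (by omega)]
  have hlin : α * ((a - 1 : k) + 1) + (a : k) * α / ((a : k) - 1) * ((p - a : k) + 1) = 0 := by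
    rw [hp]; field_simp; ring
  have hquad : α * ((a : k) * α / ((a : k) - 1)) * ((a - 1 : k) + (p - a) + 1) = 0 := by
    rw [hp]; ring
  rw [hlin, hquad]; simp

theorem stmt_13 {k : Type*} [Field k] (p : ℕ) (hp : p.Prime) (hp2 : 2 < p) [CharP k p]
    (a : ℕ) (ha1 : 1 < a) (hap : a < p) (ha2 : 2 * a + 1 < p)
    (α : k) (hα : α ≠ 0) :
    let u : MvPolynomial (Fin 2) k := X 0 ^ (a - 1) * X 1 ^ (p - a)
    let f₁ : MvPolynomial (Fin 2) k := X 0 * (C α * u + 1)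
    let f₂ : MvPolynomial (Fin 2) k := X 1 * (C ((a : k) * α / ((a : k) - 1)) * u + 1)
    pderiv 0 f₁ * pderiv 1 f₂ - pderiv 1 f₁ * pderiv 0 f₂ = 1 :=
  stmt_13_general p a ha1 hap α
end

section
/- Let k have characteristic p > 0, u = x₁ x₂, and f₁ = x₁ h₁(u), f₂ = x₂ h₂(u) with h₁, h₂ ∈ k[x]. Then ∂(f₁,f₂)/∂(x₁,x₂) ∈ k* if and only if the formal derivative of u·h₁(u)·h₂(u) with respect to u is a nonzero constant, equivalently u h₁(u) h₂(u) = α u + g(u^p) for some α ∈ k* and g ∈ k[x] with g(0) = 0. -/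
/-!
With `q = X h₁ h₂`, the chain rule gives `J = q'(x₁x₂)`. Substituting `x₁x₂` for the variable is
injective (setting `x₁ = X, x₂ = 1` undoes it), so `J` is a constant `c` iff `q' = c`. In
characteristic `p`, `q' = α` iff `q - αX` has derivative zero, i.e. is a polynomial in `X ^ p`.
-/

open MvPolynomial

section

variable {R : Type*} [CommRing R]

namespace Polynomial

theorem derivative_eq_zero_iff_exists_expand [NoZeroDivisors R] {p : ℕ} [CharP R p] (hp : p ≠ 0)
    {f : R[X]} : derivative f = 0 ↔ ∃ g : R[X], f = expand R p g := by
  constructor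
  · intro hf
    exact ⟨contract p f, (expand_contract p hf hp).symm⟩
  · rintro ⟨g, rfl⟩
    rw [derivative_expand, CharP.cast_eq_zero, zero_mul, mul_zero]

theorem derivative_eq_C_iff_exists_comp_X_pow [NoZeroDivisors R] {p : ℕ} [CharP R p]
    (hp : p ≠ 0) {q : R[X]} (hq : q.eval 0 = 0) {α : R} :
    derivative q = C α ↔ ∃ g : R[X], g.eval 0 = 0 ∧ q = C α * X + g.comp (X ^ p) := by
  have hsub : derivative q = C α ↔ derivative (q - C α * X) = 0 := by
    simp [sub_eq_zero]
  rw [hsub, derivative_eq_zero_iff_exists_expand hp]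
  constructor
  · rintro ⟨g, hg⟩
    refine ⟨g, ?_, by rw [← expand_eq_comp_X_pow, ← hg]; ring⟩
    have := congrArg (eval 0) hg
    rwa [expand_eval, zero_pow hp, eval_sub, hq, eval_mul, eval_X, mul_zero, sub_zero,
      eq_comm] at this
  · rintro ⟨g, -, hg⟩
    exact ⟨g, by rw [hg, expand_eq_comp_X_pow]; ring⟩

end Polynomial

theorem aeval_X_zero_mul_X_one_injective :
    Function.Injective (Polynomial.aeval (R := R) (X 0 * X 1 : MvPolynomial (Fin 2) R)) := by
  let ψ : MvPolynomial (Fin 2) R →ₐ[R] Polynomial R := aeval ![Polynomial.X, 1]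
  have hψ : ψ.comp (Polynomial.aeval (X 0 * X 1)) = AlgHom.id R (Polynomial R) := by
    ext
    simp [ψ]
  refine Function.LeftInverse.injective (g := ψ) fun r => ?_
  simpa using AlgHom.congr_fun hψ r

theorem aeval_X_zero_mul_X_one_eq_C_iff {r : Polynomial R} {c : R} :
    Polynomial.aeval (X 0 * X 1 : MvPolynomial (Fin 2) R) r = C c ↔ r = Polynomial.C c := by
  rw [← (aeval_X_zero_mul_X_one_injective (R := R)).eq_iff, Polynomial.aeval_C, algebraMap_eq]

theorem jacobian_eq_aeval_derivative (h₁ h₂ : Polynomial R) :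
    let u : MvPolynomial (Fin 2) R := X 0 * X 1
    let f₁ := X 0 * Polynomial.aeval u h₁
    let f₂ := X 1 * Polynomial.aeval u h₂
    pderiv 0 f₁ * pderiv 1 f₂ - pderiv 1 f₁ * pderiv 0 f₂ =
      Polynomial.aeval u (Polynomial.derivative (Polynomial.X * h₁ * h₂)) := by
  intro u f₁ f₂
  simp only [f₁, f₂, u, pderiv_mul, Derivation.map_aeval, smul_eq_mul,
    Polynomial.derivative_mul, Polynomial.derivative_X, map_add, map_mul,
    Polynomial.aeval_X, pderiv_X_self, pderiv_X, Pi.single_eq_of_ne (by decide : (1 : Fin 2) ≠ 0),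
    Pi.single_eq_of_ne (by decide : (0 : Fin 2) ≠ 1), mul_one, mul_zero, add_zero, one_mul]
  ring

end

theorem stmt_15 {k : Type*} [Field k] (p : ℕ) (hp : 0 < p) [CharP k p]
    (h₁ h₂ : Polynomial k) :
    let u : MvPolynomial (Fin 2) k := X 0 * X 1
    let f₁ : MvPolynomial (Fin 2) k := X 0 * Polynomial.aeval u h₁
    let f₂ : MvPolynomial (Fin 2) k := X 1 * Polynomial.aeval u h₂
    let J := pderiv 0 f₁ * pderiv 1 f₂ - pderiv 1 f₁ * pderiv 0 f₂
    ((∃ c : k, c ≠ 0 ∧ J = C c) ↔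
      (∃ α : k, α ≠ 0 ∧
        Polynomial.derivative (Polynomial.X * h₁ * h₂) = Polynomial.C α)) ∧
    ((∃ c : k, c ≠ 0 ∧ J = C c) ↔
      (∃ α : k, α ≠ 0 ∧ ∃ g : Polynomial k, g.eval 0 = 0 ∧
        Polynomial.X * h₁ * h₂ =
          Polynomial.C α * Polynomial.X + g.comp (Polynomial.X ^ p))) := by
  intro u f₁ f₂ J
  have hJ : J = Polynomial.aeval u (Polynomial.derivative (Polynomial.X * h₁ * h₂)) :=
    jacobian_eq_aeval_derivative h₁ h₂
  have hq : (Polynomial.X * h₁ * h₂).eval 0 = 0 := by simp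
  simp only [hJ, u, aeval_X_zero_mul_X_one_eq_C_iff,
    Polynomial.derivative_eq_C_iff_exists_comp_X_pow hp.ne' hq, and_self]
end
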